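/- Let n be a positive integer and let s = (s₁, s₂) and t = (t₁, t₂) be two elements of order n in the group ℂ* × ℂ* (product of two copies of the multiplicative group of nonzero complex numbers). Then there exists a matrix M in SL(2, ℤ), with entries a = M₀₀, b = M₀₁, c = M₁₀, d = M₁₁, such that (s₁^a · s₂^b, s₁^c · s₂^d) = (t₁, t₂). -/

import Mathlib

/-!
Fix a primitive `n`-th root of unity `ζ`. An element of order `n` of `ℂˣ × ℂˣ` is `(ζ ^ p, ζ ^ q)`
with `gcd(p, q, n) = 1`. Such a vector `(p, q)` is congruent mod `n` to a coprime integer vector,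
which is the first column of some `M ∈ SL(2, ℤ)`; the monomial map of `M` then carries `(ζ, 1)` to
`(ζ ^ p, ζ ^ q)`. Since monomial maps form a left action of `SL(2, ℤ)`, all elements of order `n`
lie in the orbit of `(ζ, 1)`.
-/

lemma exists_isCoprime_modEq {p q n : ℤ} (h : IsCoprime (gcd p q) n) :
    ∃ P Q, P ≡ p [ZMOD n] ∧ Q ≡ q [ZMOD n] ∧ IsCoprime P Q := by
  obtain ⟨p₀, q₀, hp, hq, hu⟩ := extract_gcd p q
  obtain ⟨A, B, hAB⟩ := (gcd_isUnit_iff p₀ q₀).mp hu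
  obtain ⟨x, y, hxy⟩ := h
  -- `(P, Q) = U (gcd p q, n)` for `U = !![p₀, -B; q₀, A] ∈ SL(2, ℤ)`, which preserves coprimality
  refine ⟨p - B * n, q + A * n, ?_, ?_, ⟨x * A - y * q₀, x * B + y * p₀, ?_⟩⟩
  · exact Int.modEq_iff_dvd.mpr ⟨B, by ring⟩
  · exact Int.modEq_iff_dvd.mpr ⟨-A, by ring⟩
  · linear_combination (x * A - y * q₀) * hp + (x * B + y * p₀) * hq + (x * gcd p q + y * n) * hAB
      + hxy

lemma exists_SL2Z_col_eq {P Q : ℤ} (h : IsCoprime P Q) :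
    ∃ M : Matrix.SpecialLinearGroup (Fin 2) ℤ, M 0 0 = P ∧ M 1 0 = Q := by
  obtain ⟨u, v, huv⟩ := h
  exact ⟨⟨!![P, -v; Q, u], by rw [Matrix.det_fin_two_of]; linear_combination huv⟩, rfl, rfl⟩

section Monomial

variable {G : Type*} [CommGroup G]

def monomialMap (M : Matrix (Fin 2) (Fin 2) ℤ) (s : G × G) : G × G :=
  (s.1 ^ M 0 0 * s.2 ^ M 0 1, s.1 ^ M 1 0 * s.2 ^ M 1 1)

@[simp]
lemma monomialMap_one (s : G × G) : monomialMap 1 s = s := by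
  simp [monomialMap]

lemma monomialMap_mul (M N : Matrix (Fin 2) (Fin 2) ℤ) (s : G × G) :
    monomialMap (M * N) s = monomialMap M (monomialMap N s) := by
  simp only [monomialMap, Matrix.mul_apply, Fin.sum_univ_two, zpow_add, mul_zpow, ← zpow_mul,
    Prod.mk.injEq]
  constructor <;> simp only [mul_comm, mul_left_comm, mul_assoc]

lemma monomialMap_inv_monomialMap (M : Matrix.SpecialLinearGroup (Fin 2) ℤ) (s : G × G) :
    monomialMap (↑M⁻¹ : Matrix (Fin 2) (Fin 2) ℤ) (monomialMap M s) = s := by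
  rw [← monomialMap_mul, ← Matrix.SpecialLinearGroup.coe_mul, inv_mul_cancel,
    Matrix.SpecialLinearGroup.coe_one, monomialMap_one]

lemma monomialMap_mk_one (M : Matrix (Fin 2) (Fin 2) ℤ) (x : G) :
    monomialMap M (x, 1) = (x ^ M 0 0, x ^ M 1 0) := by
  simp [monomialMap]


lemma isCoprime_gcd_of_orderOf_eq {ζ : G} {n : ℕ} (hζ : ζ ^ n = 1)
    (hn : n ≠ 0) {p q : ℤ} (hs : orderOf (ζ ^ p, ζ ^ q) = n) : IsCoprime (gcd p q) (n : ℤ) := by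
  rw [← gcd_isUnit_iff]
  set d := gcd (gcd p q) (n : ℤ)
  obtain ⟨m, hm⟩ : d ∣ n := gcd_dvd_right _ _
  have pow_m_eq_one : ∀ r : ℤ, d ∣ r → (ζ ^ r) ^ m = 1 := by
    rintro r ⟨r', rfl⟩
    rw [← zpow_mul, mul_right_comm, ← hm, zpow_mul, zpow_natCast, hζ, one_zpow]
  have hpow : (ζ ^ p, ζ ^ q) ^ m = 1 :=
    Prod.ext (pow_m_eq_one p ((gcd_dvd_left _ _).trans (gcd_dvd_left p q)))
      (pow_m_eq_one q ((gcd_dvd_left _ _).trans (gcd_dvd_right p q)))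
  obtain ⟨k, hk⟩ : (n : ℤ) ∣ m := hs ▸ orderOf_dvd_iff_zpow_eq_one.mpr hpow
  refine IsUnit.of_mul_eq_one k (mul_left_cancel₀ (Int.natCast_ne_zero.mpr hn) ?_)
  linear_combination -hm - d * hk

lemma exists_SL2Z_monomialMap_mk_one_eq {ζ : G} {n : ℕ}
    (hζ : orderOf ζ = n) (hn : n ≠ 0) (htors : ∀ x : G, x ^ n = 1 → x ∈ Subgroup.zpowers ζ)
    {s : G × G} (hs : orderOf s = n) :
    ∃ M : Matrix.SpecialLinearGroup (Fin 2) ℤ, monomialMap M (ζ, 1) = s := by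
  have hs_pow : s ^ n = 1 := hs ▸ pow_orderOf_eq_one s
  obtain ⟨p, hp⟩ := Subgroup.mem_zpowers_iff.mp (htors s.1 (congrArg Prod.fst hs_pow))
  obtain ⟨q, hq⟩ := Subgroup.mem_zpowers_iff.mp (htors s.2 (congrArg Prod.snd hs_pow))
  obtain rfl : s = (ζ ^ p, ζ ^ q) := Prod.ext hp.symm hq.symm
  obtain ⟨P, Q, hP, hQ, hPQ⟩ :=
    exists_isCoprime_modEq (isCoprime_gcd_of_orderOf_eq (hζ ▸ pow_orderOf_eq_one ζ) hn hs)
  obtain ⟨M, hM₀, hM₁⟩ := exists_SL2Z_col_eq hPQ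
  refine ⟨M, ?_⟩
  rw [← hζ] at hP hQ
  rw [monomialMap_mk_one, hM₀, hM₁, zpow_eq_zpow_iff_modEq.mpr hP, zpow_eq_zpow_iff_modEq.mpr hQ]

theorem exists_SL2Z_monomialMap_eq {ζ : G} {n : ℕ}
    (hζ : orderOf ζ = n) (hn : n ≠ 0) (htors : ∀ x : G, x ^ n = 1 → x ∈ Subgroup.zpowers ζ)
    {s t : G × G} (hs : orderOf s = n) (ht : orderOf t = n) :
    ∃ M : Matrix.SpecialLinearGroup (Fin 2) ℤ, monomialMap M s = t := by
  obtain ⟨A, rfl⟩ := exists_SL2Z_monomialMap_mk_one_eq hζ hn htors hs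
  obtain ⟨B, rfl⟩ := exists_SL2Z_monomialMap_mk_one_eq hζ hn htors ht
  exact ⟨B * A⁻¹, by
    rw [Matrix.SpecialLinearGroup.coe_mul, monomialMap_mul, monomialMap_inv_monomialMap]⟩

end Monomial

theorem SL2Z_transitive_on_order_n_torus_elements (n : ℕ) (hn : 0 < n)
    (s t : ℂˣ × ℂˣ) (hs : orderOf s = n) (ht : orderOf t = n) :
    ∃ M : Matrix.SpecialLinearGroup (Fin 2) ℤ,
      s.1 ^ (M : Matrix (Fin 2) (Fin 2) ℤ) 0 0 * s.2 ^ (M : Matrix (Fin 2) (Fin 2) ℤ) 0 1 = t.1 ∧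
      s.1 ^ (M : Matrix (Fin 2) (Fin 2) ℤ) 1 0 * s.2 ^ (M : Matrix (Fin 2) (Fin 2) ℤ) 1 1 = t.2 := by
  have : NeZero n := ⟨hn.ne'⟩
  have hζ := (Complex.isPrimitiveRoot_exp n hn.ne').isUnit_unit hn.ne'
  have htors (x : ℂˣ) (hx : x ^ n = 1) : x ∈ Subgroup.zpowers _ :=
    hζ.zpowers_eq ▸ (mem_rootsOfUnity n x).mpr hx
  obtain ⟨M, hM⟩ := exists_SL2Z_monomialMap_eq hζ.eq_orderOf.symm hn.ne' htors hs ht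
  exact ⟨M, congrArg Prod.fst hM, congrArg Prod.snd hM⟩
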